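/- Let d ≥ 1 and 0 < s with 2s < d. Then the function Φ_{s,d} is negative and strictly increasing on the interval (0, (d−2s)/2), and Φ_{s,d}((d−2s)/2) = 0. -/

import Mathlib

open MeasureTheory Real Set

noncomputable section

namespace PhiAux

open Filter Finset
open scoped Nat

/-- `x ↦ log (x + c) - log (x + s + c)` is strictly concave on `(0, ∞)` for `s > 0`, `c ≥ 0`. -/
lemma strictConcave_logdiff {s c : ℝ} (hs : 0 < s) (hc : 0 ≤ c) :
    StrictConcaveOn ℝ (Set.Ioi (0 : ℝ))
      (fun x => Real.log (x + c) - Real.log (x + s + c)) := by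
  have key : ∀ y : ℝ, 0 < y →
      HasDerivAt (fun x => Real.log (x + c) - Real.log (x + s + c))
        ((y + c)⁻¹ - (y + s + c)⁻¹) y := by
    intro y hy
    have h1 : (0:ℝ) < y + c := by linarith
    have h2 : (0:ℝ) < y + s + c := by linarith
    have d1 : HasDerivAt (fun x : ℝ => Real.log (x + c)) ((y + c)⁻¹) y := by
      simpa [Function.comp_def] using (Real.hasDerivAt_log h1.ne').comp y ((hasDerivAt_id y).add_const c)
    have d2 : HasDerivAt (fun x : ℝ => Real.log (x + s + c)) ((y + s + c)⁻¹) y := by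
      simpa [Function.comp_def] using (Real.hasDerivAt_log h2.ne').comp y
        (((hasDerivAt_id y).add_const s).add_const c)
    exact d1.sub d2
  apply strictConcaveOn_of_deriv2_neg (convex_Ioi 0)
  · exact fun x hx => ((key x hx).continuousAt).continuousWithinAt
  · intro x hx
    rw [interior_Ioi] at hx
    have hx0 : (0:ℝ) < x := hx
    have h1 : (0:ℝ) < x + c := by linarith
    have h2 : (0:ℝ) < x + s + c := by linarith
    have hev : deriv (fun x => Real.log (x + c) - Real.log (x + s + c)) =ᶠ[nhds x]
        (fun y => (y + c)⁻¹ - (y + s + c)⁻¹) := by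
      filter_upwards [Ioi_mem_nhds hx0] with y hy
      exact (key y hy).deriv
    have hit : deriv^[2] (fun x => Real.log (x + c) - Real.log (x + s + c)) x =
        deriv (fun y => (y + c)⁻¹ - (y + s + c)⁻¹) x := by
      show deriv (deriv (fun x => Real.log (x + c) - Real.log (x + s + c))) x = _
      exact hev.deriv_eq
    rw [hit]
    have i1 : HasDerivAt (fun y : ℝ => (y + c)⁻¹) (-(((x + c) ^ 2)⁻¹)) x := by
      simpa [Function.comp_def] using (hasDerivAt_inv h1.ne').comp x ((hasDerivAt_id x).add_const c)
    have i2 : HasDerivAt (fun y : ℝ => (y + s + c)⁻¹) (-(((x + s + c) ^ 2)⁻¹)) x := by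
      simpa [Function.comp_def] using (hasDerivAt_inv h2.ne').comp x
        (((hasDerivAt_id x).add_const s).add_const c)
    rw [(show HasDerivAt (fun y : ℝ => (y + c)⁻¹ - (y + s + c)⁻¹)
        (-(((x + c) ^ 2)⁻¹) - -(((x + s + c) ^ 2)⁻¹)) x from i1.sub i2).deriv]
    have hsq : ((x + s + c) ^ 2)⁻¹ < ((x + c) ^ 2)⁻¹ := by
      apply inv_strictAnti₀ (by positivity)
      nlinarith
    linarith

/-- `F s x = log Γ(x+s) - log Γ(x)`. -/
def F (s x : ℝ) : ℝ := Real.log (Real.Gamma (x + s)) - Real.log (Real.Gamma x)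

/-- Partial sums approximating `F`. -/
def D (s : ℝ) (n : ℕ) (x : ℝ) : ℝ :=
  s * Real.log n + ∑ j ∈ Finset.range (n + 1), (Real.log (x + j) - Real.log (x + s + j))

lemma log_gammaSeq {x : ℝ} (hx : 0 < x) {n : ℕ} (hn : 1 ≤ n) :
    Real.log (Real.GammaSeq x n) =
      x * Real.log n + Real.log (n !) - ∑ j ∈ Finset.range (n + 1), Real.log (x + j) := by
  have hn' : (0:ℝ) < n := by exact_mod_cast hn
  have hfac : (0:ℝ) < (n ! : ℝ) := by exact_mod_cast n.factorial_pos
  have hterm' : ∀ j : ℕ, (0:ℝ) < x + (j : ℝ) := fun j =>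
    add_pos_of_pos_of_nonneg hx (Nat.cast_nonneg j)
  have hterm : ∀ j ∈ Finset.range (n + 1), x + (j : ℝ) ≠ 0 := fun j _ => (hterm' j).ne'
  have hprod : (0:ℝ) < ∏ j ∈ Finset.range (n + 1), (x + j) :=
    Finset.prod_pos fun j _ => hterm' j
  rw [Real.GammaSeq, Real.log_div (mul_pos (Real.rpow_pos_of_pos hn' x) hfac).ne' hprod.ne',
    Real.log_mul (Real.rpow_pos_of_pos hn' x).ne' hfac.ne', Real.log_rpow hn',
    Real.log_prod hterm]

lemma tendsto_D {s x : ℝ} (hs : 0 < s) (hx : 0 < x) :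
    Tendsto (fun n => D s n x) atTop (nhds (F s x)) := by
  have hxs : 0 < x + s := by linarith
  have h1 : Tendsto (fun n => Real.log (Real.GammaSeq (x + s) n)) atTop
      (nhds (Real.log (Real.Gamma (x + s)))) :=
    (Real.GammaSeq_tendsto_Gamma (x + s)).log (Real.Gamma_pos_of_pos hxs).ne'
  have h2 : Tendsto (fun n => Real.log (Real.GammaSeq x n)) atTop
      (nhds (Real.log (Real.Gamma x))) :=
    (Real.GammaSeq_tendsto_Gamma x).log (Real.Gamma_pos_of_pos hx).ne'
  have h3 := h1.sub h2
  refine h3.congr' ?_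
  filter_upwards [eventually_ge_atTop 1] with n hn
  rw [log_gammaSeq hxs hn, log_gammaSeq hx hn, D, Finset.sum_sub_distrib]
  ring

lemma concaveOn_sum {ι : Type*} (t : Finset ι) (g : ι → ℝ → ℝ)
    (hg : ∀ j ∈ t, ConcaveOn ℝ (Set.Ioi (0:ℝ)) (g j)) :
    ConcaveOn ℝ (Set.Ioi (0:ℝ)) (fun x => ∑ j ∈ t, g j x) := by
  classical
  induction t using Finset.induction_on with
  | empty => simpa using concaveOn_const (0:ℝ) (convex_Ioi 0)
  | insert _ _ hni ih =>
    rename_i a t'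
    simp only [Finset.sum_insert hni]
    exact (hg a (t'.mem_insert_self a)).add
      (ih fun j hj => hg j (Finset.mem_insert_of_mem hj))

lemma concave_part {s : ℝ} (hs : 0 < s) (n : ℕ) :
    ConcaveOn ℝ (Set.Ioi (0:ℝ))
      (fun x => D s n x - (Real.log x - Real.log (x + s))) := by
  have heq : (fun x => D s n x - (Real.log x - Real.log (x + s))) =
      (fun x => s * Real.log n +
        ∑ j ∈ Finset.range n, (Real.log (x + ((j : ℝ) + 1)) - Real.log (x + s + ((j : ℝ) + 1)))) := by
    funext x
    rw [D, Finset.sum_range_succ']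
    simp only [Nat.cast_add, Nat.cast_one, Nat.cast_zero, add_zero]
    ring
  rw [heq]
  have h1 : ConcaveOn ℝ (Set.Ioi (0:ℝ)) (fun _ : ℝ => s * Real.log n) :=
    concaveOn_const _ (convex_Ioi 0)
  have h2 : ConcaveOn ℝ (Set.Ioi (0:ℝ))
      (fun x => ∑ j ∈ Finset.range n,
        (Real.log (x + ((j : ℝ) + 1)) - Real.log (x + s + ((j : ℝ) + 1)))) := by
    apply concaveOn_sum
    intro j _
    exact (strictConcave_logdiff hs (by positivity : (0:ℝ) ≤ (j : ℝ) + 1)).concaveOn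
  exact h1.add h2

lemma concaveOn_of_tendsto {f : ℕ → ℝ → ℝ} {g : ℝ → ℝ} {S : Set ℝ} (hS : Convex ℝ S)
    (hf : ∀ n, ConcaveOn ℝ S (f n))
    (h : ∀ x ∈ S, Tendsto (fun n => f n x) atTop (nhds (g x))) :
    ConcaveOn ℝ S g := by
  refine ⟨hS, fun x hx y hy a b ha hb hab => ?_⟩
  have hxy : a • x + b • y ∈ S := hS hx hy ha hb hab
  have hlim : Tendsto (fun n => a • f n x + b • f n y) atTop (nhds (a • g x + b • g y)) := by
    simpa [smul_eq_mul] using (((h x hx).const_mul a).add ((h y hy).const_mul b))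
  exact le_of_tendsto_of_tendsto' hlim (h _ hxy) (fun n => (hf n).2 hx hy ha hb hab)

lemma F_strictConcaveOn {s : ℝ} (hs : 0 < s) :
    StrictConcaveOn ℝ (Set.Ioi (0:ℝ)) (F s) := by
  have hconc : ConcaveOn ℝ (Set.Ioi (0:ℝ))
      (fun x => F s x - (Real.log x - Real.log (x + s))) :=
    concaveOn_of_tendsto (convex_Ioi 0) (fun n => concave_part hs n)
      (fun x hx => ((tendsto_D hs hx).sub_const _))
  have h0 : StrictConcaveOn ℝ (Set.Ioi (0:ℝ)) (fun x => Real.log x - Real.log (x + s)) := by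
    have := strictConcave_logdiff hs (le_refl (0:ℝ))
    simpa using this
  have := h0.add_concaveOn hconc
  have heq : ((fun x => Real.log x - Real.log (x + s)) +
      (fun x => F s x - (Real.log x - Real.log (x + s)))) = F s := by
    funext x; simp only [Pi.add_apply]; ring
  rwa [heq] at this

/-- Key strict rearrangement inequality from strict concavity. -/
lemma sum_lt {f : ℝ → ℝ} (hF : StrictConcaveOn ℝ (Set.Ioi (0:ℝ)) f) {a1 a2 b2 b1 : ℝ}
    (ha1 : 0 < a1) (h12 : a1 < a2) (h2 : a2 ≤ b2) (hsum : a1 + b1 = a2 + b2) :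
    f a1 + f b1 < f a2 + f b2 := by
  have hb21 : b2 < b1 := by linarith
  have hb1 : 0 < b1 := by linarith
  have hden : 0 < b1 - a1 := by linarith
  set t : ℝ := (a2 - a1) / (b1 - a1) with ht
  have ht0 : 0 < t := div_pos (by linarith) hden
  have ht1 : t < 1 := (div_lt_one hden).2 (by linarith)
  have hkey : t * (b1 - a1) = a2 - a1 := by rw [ht, div_mul_cancel₀ _ hden.ne']
  have e1 : (1 - t) * a1 + t * b1 = a2 := by linear_combination hkey
  have e2 : t * a1 + (1 - t) * b1 = b2 := by linear_combination -hkey + hsum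
  have hne : a1 ≠ b1 := by linarith
  have k1 := hF.2 (Set.mem_Ioi.2 ha1) (Set.mem_Ioi.2 hb1) hne
    (by linarith : (0:ℝ) < 1 - t) ht0 (by ring)
  have k2 := hF.2 (Set.mem_Ioi.2 ha1) (Set.mem_Ioi.2 hb1) hne ht0
    (by linarith : (0:ℝ) < 1 - t) (by ring)
  rw [smul_eq_mul, smul_eq_mul, smul_eq_mul, smul_eq_mul, e1] at k1
  rw [smul_eq_mul, smul_eq_mul, smul_eq_mul, smul_eq_mul, e2] at k2
  have hsum2 : f a1 + f b1 =
      ((1 - t) * f a1 + t * f b1) + (t * f a1 + (1 - t) * f b1) := by ring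
  rw [hsum2]
  exact add_lt_add k1 k2

lemma exp_F {s x : ℝ} (hs : 0 < s) (hx : 0 < x) :
    Real.exp (F s x) = Real.Gamma (x + s) / Real.Gamma x := by
  rw [F, Real.exp_sub, Real.exp_log (Real.Gamma_pos_of_pos (by linarith)),
    Real.exp_log (Real.Gamma_pos_of_pos hx)]

end PhiAux

/-- The function `Φ_{s,d}(α)` from the ground state substitution. -/
def Phi (s : ℝ) (d : ℕ) (α : ℝ) : ℝ :=
  2 ^ (2 * s) *
    (Real.Gamma ((α + 2 * s) / 2) * Real.Gamma ((d - α) / 2) /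
        (Real.Gamma ((d - α - 2 * s) / 2) * Real.Gamma (α / 2)) -
      Real.Gamma ((d + 2 * s) / 4) ^ 2 / Real.Gamma ((d - 2 * s) / 4) ^ 2)

/-- `Φ_{s,d}` is negative and strictly increasing on `(0, (d-2s)/2)`, and vanishes
at the right endpoint `(d-2s)/2`. -/
theorem Phi_neg_strictMono (d : ℕ) (hd : 1 ≤ d) (s : ℝ) (hs0 : 0 < s) (hsd : 2 * s < d) :
    (∀ α ∈ Set.Ioo (0 : ℝ) (((d : ℝ) - 2 * s) / 2), Phi s d α < 0) ∧
      StrictMonoOn (Phi s d) (Set.Ioo (0 : ℝ) (((d : ℝ) - 2 * s) / 2)) ∧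
      Phi s d (((d : ℝ) - 2 * s) / 2) = 0 := by
  open PhiAux in
  have hd' : (0:ℝ) < (d:ℝ) - 2 * s := by linarith
  set m : ℝ := ((d : ℝ) - 2 * s) / 2 with hm
  have hm0 : 0 < m := by rw [hm]; linarith
  have hFsc := PhiAux.F_strictConcaveOn hs0
  have hG : ∀ α : ℝ, 0 < α → α ≤ m →
      Real.Gamma ((α + 2 * s) / 2) * Real.Gamma (((d:ℝ) - α) / 2) /
        (Real.Gamma (((d:ℝ) - α - 2 * s) / 2) * Real.Gamma (α / 2)) =
      Real.exp (PhiAux.F s (α / 2) + PhiAux.F s (m - α / 2)) := by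
    intro α hα hαm
    have ha : 0 < α / 2 := by linarith
    have hb : 0 < m - α / 2 := by linarith
    have e1 : (α + 2 * s) / 2 = α / 2 + s := by ring
    have e2 : ((d:ℝ) - α) / 2 = (m - α / 2) + s := by rw [hm]; ring
    have e3 : ((d:ℝ) - α - 2 * s) / 2 = m - α / 2 := by rw [hm]; ring
    rw [e1, e2, e3, Real.exp_add, PhiAux.exp_F hs0 ha, PhiAux.exp_F hs0 hb,
      div_mul_div_comm, mul_comm (Real.Gamma (m - α / 2)) (Real.Gamma (α / 2))]
  have hC : Real.Gamma (((d:ℝ) + 2 * s) / 4) ^ 2 / Real.Gamma (((d:ℝ) - 2 * s) / 4) ^ 2 =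
      Real.exp (PhiAux.F s (m / 2) + PhiAux.F s (m - m / 2)) := by
    have e1 : ((d:ℝ) + 2 * s) / 4 = m / 2 + s := by rw [hm]; ring
    have e2 : ((d:ℝ) - 2 * s) / 4 = m / 2 := by rw [hm]; ring
    have e3 : m - m / 2 = m / 2 := by ring
    rw [e1, e2, e3, Real.exp_add, PhiAux.exp_F hs0 (by linarith : (0:ℝ) < m / 2), sq, sq,
      div_mul_div_comm]
  have hlt : ∀ α1 α2 : ℝ, 0 < α1 → α1 < α2 → α2 ≤ m →
      PhiAux.F s (α1 / 2) + PhiAux.F s (m - α1 / 2) <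
        PhiAux.F s (α2 / 2) + PhiAux.F s (m - α2 / 2) := by
    intro α1 α2 h1 h12 h2m
    exact PhiAux.sum_lt hFsc (by linarith) (by linarith) (by linarith) (by ring)
  have hpow : (0:ℝ) < 2 ^ (2 * s) := Real.rpow_pos_of_pos two_pos _
  refine ⟨?_, ?_, ?_⟩
  · intro α hα
    obtain ⟨hα0, hαm⟩ := hα
    have hGα := hG α hα0 hαm.le
    simp only [Phi]
    rw [hGα, hC]
    apply mul_neg_of_pos_of_neg hpow
    rw [sub_neg]
    exact Real.exp_lt_exp.2 (hlt α m hα0 hαm le_rfl)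
  · intro α1 hα1 α2 hα2 h12
    obtain ⟨h10, h1m⟩ := hα1
    obtain ⟨h20, h2m⟩ := hα2
    simp only [Phi]
    rw [hG α1 h10 h1m.le, hG α2 h20 h2m.le]
    exact mul_lt_mul_of_pos_left
      (sub_lt_sub_right (Real.exp_lt_exp.2 (hlt α1 α2 h10 h12 h2m.le)) _) hpow
  · simp only [Phi]
    have e1 : (m + 2 * s) / 2 = ((d:ℝ) + 2 * s) / 4 := by rw [hm]; ring
    have e2 : ((d:ℝ) - m) / 2 = ((d:ℝ) + 2 * s) / 4 := by rw [hm]; ring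
    have e3 : ((d:ℝ) - m - 2 * s) / 2 = ((d:ℝ) - 2 * s) / 4 := by rw [hm]; ring
    have e4 : m / 2 = ((d:ℝ) - 2 * s) / 4 := by rw [hm]; ring
    rw [e1, e2, e3, e4]
    have : Real.Gamma (((d:ℝ) + 2 * s) / 4) * Real.Gamma (((d:ℝ) + 2 * s) / 4) /
        (Real.Gamma (((d:ℝ) - 2 * s) / 4) * Real.Gamma (((d:ℝ) - 2 * s) / 4)) =
        Real.Gamma (((d:ℝ) + 2 * s) / 4) ^ 2 / Real.Gamma (((d:ℝ) - 2 * s) / 4) ^ 2 := by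
      ring
    rw [this, sub_self, mul_zero]
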